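/- Let μ₀ ∈ ℝ, σ₀ > 0 and η > 1/2 be fixed, and for each K ≥ 2 let μ_1, …, μ_K be i.i.d. N(μ₀, σ₀²) random variables, μ_* = max_{1≤k≤K} μ_k, J = #{k : μ_k < μ_*}, and Δ_K = (log K)^{−η}. Then P( max_{k: μ_k < μ_*} μ_k ≤ μ_* − Δ_K, max_{1≤k≤K} |μ_k| ≤ Δ_K^{−1}, and J ≥ Δ_K·K ) → 1 as K → ∞. -/

import Mathlib

/-!
Let `ℓ = log K`, `Δ = ℓ^{-η}`, fix `1 < β < η + 1/2` and put `a = μ₀ + σ₀ t` with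
`t = √(2ℓ - β log ℓ)`. Three events have vanishing probability:
* all `μ_k ≤ a`: by independence this has probability at most `exp(-K P(μ₁ > a))`, and
  `K P(μ₁ > a) ≍ ℓ^{(β-1)/2} → ∞`;
* two distinct values, one above `a - Δ`, lie within `Δ` of each other: a union bound over pairs,
  independence and Mills' ratio give `K² · P(μ₁ > a - Δ) · 2Δ φ(a - 2Δ) ≍ ℓ^{β-η-1/2} → 0`, where
  `tΔ → 0` because `η > 1/2`;
* some `|μ_k| > Δ⁻¹ = ℓ^η`: the Gaussian tail beats the factor `K = e^ℓ` because `2η > 1`.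
Outside these events the maximum exceeds `a`, so it is attained only once and every other value is
at least `Δ` below it; hence `J = K - 1 ≥ Δ K`.
-/

open MeasureTheory ProbabilityTheory Filter Set Real
open scoped ENNReal NNReal Topology

section Gaussian

variable {μ : ℝ} {v : ℝ≥0}

lemma gaussianPDFReal_antitoneOn : AntitoneOn (gaussianPDFReal μ v) (Ici μ) := by
  intro x hx y hy hxy
  simp only [gaussianPDFReal]
  gcongr
  exact sub_nonneg.mpr hx

lemma gaussianPDFReal_add_mul {σ : ℝ} (hσ : 0 < σ) (μ u : ℝ) :
    gaussianPDFReal μ ⟨σ ^ 2, sq_nonneg σ⟩ (μ + σ * u) = (σ * √(2 * π))⁻¹ * rexp (-u ^ 2 / 2) := by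
  have hsqrt : √(2 * π * σ ^ 2) = σ * √(2 * π) := by
    rw [mul_comm (2 * π), Real.sqrt_mul (sq_nonneg σ), Real.sqrt_sq hσ.le]
  change (√(2 * π * σ ^ 2))⁻¹ * rexp (-(μ + σ * u - μ) ^ 2 / (2 * σ ^ 2)) = _
  rw [hsqrt, add_sub_cancel_left]
  congr 2
  field_simp

lemma gaussianReal_Ioo_le (hv : v ≠ 0) {b c : ℝ} (hb : μ ≤ b) :
    gaussianReal μ v (Ioo b c) ≤ ENNReal.ofReal ((c - b) * gaussianPDFReal μ v b) := by
  calc gaussianReal μ v (Ioo b c)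
      = ∫⁻ x in Ioo b c, ENNReal.ofReal (gaussianPDFReal μ v x) := gaussianReal_apply _ hv _
    _ ≤ ∫⁻ _ in Ioo b c, ENNReal.ofReal (gaussianPDFReal μ v b) :=
        setLIntegral_mono measurable_const fun x hx =>
          ENNReal.ofReal_le_ofReal (gaussianPDFReal_antitoneOn hb (hb.trans hx.1.le) hx.1.le)
    _ = ENNReal.ofReal ((c - b) * gaussianPDFReal μ v b) := by
        rw [setLIntegral_const, Real.volume_Ioo, mul_comm (c - b),
          ENNReal.ofReal_mul (gaussianPDFReal_nonneg _ _ _)]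

lemma ofReal_mul_gaussianPDFReal_le_gaussianReal_Ioi (hv : v ≠ 0) {a s : ℝ} (ha : μ ≤ a)
    (hs : 0 ≤ s) :
    ENNReal.ofReal (s * gaussianPDFReal μ v (a + s)) ≤ gaussianReal μ v (Ioi a) := by
  calc ENNReal.ofReal (s * gaussianPDFReal μ v (a + s))
      = ∫⁻ _ in Ioc a (a + s), ENNReal.ofReal (gaussianPDFReal μ v (a + s)) := by
        rw [setLIntegral_const, Real.volume_Ioc, add_sub_cancel_left, mul_comm s,
          ENNReal.ofReal_mul (gaussianPDFReal_nonneg _ _ _)]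
    _ ≤ ∫⁻ x in Ioc a (a + s), ENNReal.ofReal (gaussianPDFReal μ v x) :=
        setLIntegral_mono (measurable_gaussianPDFReal _ _).ennreal_ofReal fun x hx =>
          ENNReal.ofReal_le_ofReal
            (gaussianPDFReal_antitoneOn (ha.trans hx.1.le) (by simp; linarith) hx.2)
    _ ≤ ∫⁻ x in Ioi a, ENNReal.ofReal (gaussianPDFReal μ v x) :=
        lintegral_mono_set Ioc_subset_Ioi_self
    _ = gaussianReal μ v (Ioi a) := (gaussianReal_apply _ hv _).symm

lemma hasDerivAt_neg_var_mul_gaussianPDFReal (x : ℝ) :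
    HasDerivAt (fun y => -(v : ℝ) * gaussianPDFReal μ v y)
      ((x - μ) * gaussianPDFReal μ v x) x := by
  have hexp :
      HasDerivAt (fun y => -(y - μ) ^ 2 / (2 * (v : ℝ))) (-(2 * (x - μ)) / (2 * v)) x := by
    simpa using (((hasDerivAt_id x).sub_const μ).fun_pow 2).fun_neg.div_const (2 * (v : ℝ))
  refine ((hexp.exp.const_mul (√(2 * π * v))⁻¹).const_mul (-(v : ℝ))).congr_deriv ?_
  rw [gaussianPDFReal]
  rcases eq_or_ne (v : ℝ) 0 with hv | hv
  · simp [hv]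
  field_simp

/-- Mills' ratio bound: `1 ≤ (x - μ) / (a - μ)` on `Ioi a`, and `(x - μ) * gaussianPDFReal μ v x`
has the explicit antiderivative above. -/
lemma gaussianReal_Ioi_le (hv : v ≠ 0) {a : ℝ} (ha : μ < a) :
    gaussianReal μ v (Ioi a) ≤ ENNReal.ofReal (v / (a - μ) * gaussianPDFReal μ v a) := by
  have hnonneg : ∀ x ∈ Ioi a, 0 ≤ (x - μ) * gaussianPDFReal μ v x := fun x hx =>
    mul_nonneg (by linarith [hx.out]) (gaussianPDFReal_nonneg _ _ _)
  have hlim : Tendsto (fun y => -(v : ℝ) * gaussianPDFReal μ v y) atTop (𝓝 0) := by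
    have hsub : Tendsto (fun y => y - μ) atTop atTop :=
      tendsto_atTop_add_const_right _ (-μ) tendsto_id
    have h : Tendsto (fun y => -(y - μ) ^ 2 / (2 * (v : ℝ))) atTop atBot :=
      (tendsto_neg_atTop_atBot.comp ((tendsto_pow_atTop two_ne_zero).comp hsub)).atBot_div_const
        (by positivity)
    have := ((tendsto_exp_atBot.comp h).const_mul (√(2 * π * v))⁻¹).const_mul (-(v : ℝ))
    rwa [mul_zero, mul_zero] at this
  have hderiv := fun x (_ : x ∈ Ici a) => hasDerivAt_neg_var_mul_gaussianPDFReal (μ := μ) (v := v) x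
  have hint := integrableOn_Ioi_deriv_of_nonneg' hderiv hnonneg hlim
  have hmoment := integral_Ioi_of_hasDerivAt_of_nonneg' hderiv hnonneg hlim
  rw [gaussianReal_apply_eq_integral _ hv]
  refine ENNReal.ofReal_le_ofReal ?_
  calc ∫ x in Ioi a, gaussianPDFReal μ v x
      ≤ ∫ x in Ioi a, (a - μ)⁻¹ * ((x - μ) * gaussianPDFReal μ v x) := by
        refine setIntegral_mono_on (integrable_gaussianPDFReal μ v).integrableOn
          (hint.const_mul _) measurableSet_Ioi fun x hx => ?_
        rw [← mul_assoc, inv_mul_eq_div]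
        exact le_mul_of_one_le_left (gaussianPDFReal_nonneg _ _ _)
          ((one_le_div (sub_pos.mpr ha)).mpr (by linarith [hx.out]))
    _ = v / (a - μ) * gaussianPDFReal μ v a := by
        rw [integral_const_mul, hmoment]
        ring

lemma gaussianReal_lt_abs_sub_le (hv : v ≠ 0) {r : ℝ} (hr : 0 < r) :
    gaussianReal μ v {x | r < |x - μ|} ≤
      ENNReal.ofReal (2 * (v / r * gaussianPDFReal μ v (μ + r))) := by
  have hsplit : {x | r < |x - μ|} = Ioi (μ + r) ∪ (2 * μ - ·) ⁻¹' Ioi (μ + r) := by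
    ext x
    simp only [mem_ofPred_eq, mem_union, mem_Ioi, mem_preimage, lt_abs]
    constructor <;> rintro (h | h) <;> [left; right; left; right] <;> linarith
  have hreflect :
      gaussianReal μ v ((2 * μ - ·) ⁻¹' Ioi (μ + r)) = gaussianReal μ v (Ioi (μ + r)) := by
    rw [← Measure.map_apply (by fun_prop) measurableSet_Ioi, gaussianReal_map_const_sub,
      two_mul, add_sub_cancel_right]
  have hmills := gaussianReal_Ioi_le hv (lt_add_of_pos_right μ hr)
  rw [add_sub_cancel_left] at hmills
  calc gaussianReal μ v {x | r < |x - μ|}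
      ≤ gaussianReal μ v (Ioi (μ + r)) + gaussianReal μ v ((2 * μ - ·) ⁻¹' Ioi (μ + r)) :=
        hsplit ▸ measure_union_le _ _
    _ = gaussianReal μ v (Ioi (μ + r)) + gaussianReal μ v (Ioi (μ + r)) := by rw [hreflect]
    _ ≤ ENNReal.ofReal (2 * (v / r * gaussianPDFReal μ v (μ + r))) := by
        rw [ENNReal.ofReal_mul zero_le_two, ENNReal.ofReal_ofNat, two_mul]
        gcongr

end Gaussian

lemma prob_compl_le_ofReal_exp {α : Type*} [MeasurableSpace α] {ν : Measure α}
    [IsProbabilityMeasure ν] {s : Set α} (hs : MeasurableSet s) {p : ℝ}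
    (hp : ENNReal.ofReal p ≤ ν s) : ν sᶜ ≤ ENNReal.ofReal (rexp (-p)) := by
  rw [prob_compl_eq_one_sub hs, tsub_le_iff_right]
  calc (1 : ℝ≥0∞) = ENNReal.ofReal 1 := ENNReal.ofReal_one.symm
    _ ≤ ENNReal.ofReal (rexp (-p) + p) := by
        gcongr
        linarith [add_one_le_exp (-p)]
    _ ≤ ENNReal.ofReal (rexp (-p)) + ν s :=
        ENNReal.ofReal_add_le.trans (add_le_add le_rfl hp)

section MeasureLimits

variable {Ω ι : Type*} [MeasurableSpace Ω] {P : Measure Ω} {l : Filter ι} {A B : ι → Set Ω}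

lemma tendsto_measure_union_nhds_zero (hA : Tendsto (fun i => P (A i)) l (𝓝 0))
    (hB : Tendsto (fun i => P (B i)) l (𝓝 0)) :
    Tendsto (fun i => P (A i ∪ B i)) l (𝓝 0) :=
  tendsto_of_tendsto_of_tendsto_of_le_of_le tendsto_const_nhds (by simpa using hA.add hB)
    (fun _ => zero_le) fun _ => measure_union_le _ _

lemma tendsto_measure_nhds_one_of_compl_subset [IsProbabilityMeasure P]
    (hBA : ∀ᶠ i in l, (B i)ᶜ ⊆ A i) (hB : Tendsto (fun i => P (B i)) l (𝓝 0)) :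
    Tendsto (fun i => P (A i)) l (𝓝 1) := by
  have hlow : Tendsto (fun i => 1 - P (B i)) l (𝓝 1) := by
    simpa using ENNReal.Tendsto.sub tendsto_const_nhds hB (Or.inl ENNReal.one_ne_top)
  refine tendsto_of_tendsto_of_tendsto_of_le_of_le' hlow tendsto_const_nhds ?_
    (Eventually.of_forall fun _ => prob_le_one)
  filter_upwards [hBA] with i hi
  rw [tsub_le_iff_right, add_comm]
  calc 1 = P (B i ∪ (B i)ᶜ) := by rw [union_compl_self, measure_univ]
    _ ≤ P (B i) + P (B i)ᶜ := measure_union_le _ _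
    _ ≤ P (B i) + P (A i) := by gcongr

end MeasureLimits

open Finset in
lemma le_sup'_sub_and_card_filter_lt_sup' {ι : Type*} {s : Finset ι} (hs : s.Nonempty)
    {x : ι → ℝ} {a Δ : ℝ} (hΔ : 0 < Δ) (ha : a < s.sup' hs x)
    (hgap : ∀ p ∈ s.offDiag, ¬(a - Δ < x p.1 ∧ |x p.2 - x p.1| < Δ)) :
    (∀ k ∈ s, x k < s.sup' hs x → x k ≤ s.sup' hs x - Δ) ∧
      #{k ∈ s | x k < s.sup' hs x} = #s - 1 := by
  classical
  obtain ⟨j, hj, hxj⟩ := exists_mem_eq_sup' hs x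
  have hbelow : ∀ k ∈ s, k ≠ j → x k ≤ s.sup' hs x - Δ := by
    intro k hk hkj
    by_contra! hlt
    refine hgap (k, j) (mem_offDiag.mpr ⟨hk, hj, hkj⟩) ⟨by linarith, ?_⟩
    rw [← hxj, abs_of_nonneg (sub_nonneg.mpr (le_sup' x hk))]
    linarith
  have hfilter : {k ∈ s | x k < s.sup' hs x} = s.erase j := by
    ext k
    simp only [mem_filter, mem_erase]
    constructor
    · rintro ⟨hk, hlt⟩
      exact ⟨by rintro rfl; linarith, hk⟩
    · rintro ⟨hkj, hk⟩
      exact ⟨hk, by linarith [hbelow k hk hkj]⟩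
  refine ⟨fun k hk hlt => hbelow k hk ?_, by rw [hfilter, card_erase_of_mem hj]⟩
  rintro rfl
  linarith

section GaussianFamily

variable {Ω : Type*} [MeasurableSpace Ω] {P : Measure Ω} {μ : ℝ} {v : ℝ≥0} {X : ℕ → Ω → ℝ}

lemma measure_lt_and_abs_sub_lt_le [IsFiniteMeasure P] (hv : v ≠ 0) {f g : Ω → ℝ}
    (hf : Measurable f) (hg : Measurable g) (hfg : IndepFun f g P)
    (hlaw : P.map g = gaussianReal μ v) {b Δ : ℝ} (hΔ : 0 ≤ Δ) (hb : μ ≤ b - Δ) :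
    P {ω | b < f ω ∧ |g ω - f ω| < Δ} ≤
      P (f ⁻¹' Ioi b) * ENNReal.ofReal (2 * Δ * gaussianPDFReal μ v (b - Δ)) := by
  set S : Set (ℝ × ℝ) := {p | b < p.1 ∧ |p.2 - p.1| < Δ}
  have hS : MeasurableSet S :=
    (measurableSet_lt measurable_const measurable_fst).inter
      (measurableSet_lt (measurable_snd.sub measurable_fst).abs measurable_const)
  have hslice : ∀ x, gaussianReal μ v (Prod.mk x ⁻¹' S) ≤
      (Ioi b).indicator (fun _ => ENNReal.ofReal (2 * Δ * gaussianPDFReal μ v (b - Δ))) x := by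
    intro x
    by_cases hx : b < x
    · have hIoo : Prod.mk x ⁻¹' S = Ioo (x - Δ) (x + Δ) := by
        ext y
        simp only [S, mem_preimage, mem_ofPred_eq, mem_Ioo, hx, true_and, abs_lt]
        constructor <;> rintro ⟨h₁, h₂⟩ <;> constructor <;> linarith
      rw [hIoo, indicator_of_mem (mem_Ioi.mpr hx)]
      refine (gaussianReal_Ioo_le hv (by linarith)).trans (ENNReal.ofReal_le_ofReal ?_)
      rw [add_sub_sub_cancel, ← two_mul]
      gcongr
      exact gaussianPDFReal_antitoneOn hb (by simp; linarith) (by linarith)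
    · have hempty : Prod.mk x ⁻¹' S = ∅ := by
        ext y
        simp only [S, mem_preimage, mem_ofPred_eq, mem_empty_iff_false, iff_false]
        exact fun h => hx h.1
      simp [hempty]
  calc P {ω | b < f ω ∧ |g ω - f ω| < Δ}
      = ((P.map f).prod (gaussianReal μ v)) S := by
        rw [← hlaw, ← (indepFun_iff_map_prod_eq_prod_map_map hf.aemeasurable
          hg.aemeasurable).mp hfg, Measure.map_apply (hf.prodMk hg) hS]
        rfl
    _ ≤ ∫⁻ x, (Ioi b).indicator
          (fun _ => ENNReal.ofReal (2 * Δ * gaussianPDFReal μ v (b - Δ))) x ∂P.map f := by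
        rw [Measure.prod_apply hS]
        exact lintegral_mono hslice
    _ = P (f ⁻¹' Ioi b) * ENNReal.ofReal (2 * Δ * gaussianPDFReal μ v (b - Δ)) := by
        rw [lintegral_indicator measurableSet_Ioi, setLIntegral_const,
          Measure.map_apply hf measurableSet_Ioi, mul_comm]

lemma measure_forall_le_le (hv : v ≠ 0) (hmeas : ∀ k, Measurable (X k)) (hindep : iIndepFun X P)
    (hlaw : ∀ k, P.map (X k) = gaussianReal μ v) (K : ℕ) {a s : ℝ} (ha : μ ≤ a) (hs : 0 ≤ s) :
    P {ω | ∀ k < K, X k ω ≤ a} ≤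
      ENNReal.ofReal (rexp (-(K * (s * gaussianPDFReal μ v (a + s))))) := by
  have hIic : gaussianReal μ v (Iic a) ≤
      ENNReal.ofReal (rexp (-(s * gaussianPDFReal μ v (a + s)))) := by
    rw [← compl_Ioi]
    exact prob_compl_le_ofReal_exp measurableSet_Ioi
      (ofReal_mul_gaussianPDFReal_le_gaussianReal_Ioi hv ha hs)
  have hinter : {ω | ∀ k < K, X k ω ≤ a} = ⋂ k ∈ Finset.range K, X k ⁻¹' Iic a := by
    ext ω
    simp
  calc P {ω | ∀ k < K, X k ω ≤ a}
      = ∏ k ∈ Finset.range K, gaussianReal μ v (Iic a) := by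
        rw [hinter, hindep.meas_biInter fun k _ => ⟨Iic a, measurableSet_Iic, rfl⟩]
        refine Finset.prod_congr rfl fun k _ => ?_
        rw [← hlaw k, Measure.map_apply (hmeas k) measurableSet_Iic]
    _ ≤ ENNReal.ofReal (rexp (-(s * gaussianPDFReal μ v (a + s)))) ^ K := by
        rw [Finset.prod_const, Finset.card_range]
        gcongr
    _ = ENNReal.ofReal (rexp (-(K * (s * gaussianPDFReal μ v (a + s))))) := by
        rw [← ENNReal.ofReal_pow (exp_pos _).le, ← exp_nat_mul, mul_neg]

lemma measure_exists_close_pair_le [IsProbabilityMeasure P] (hv : v ≠ 0)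
    (hmeas : ∀ k, Measurable (X k)) (hindep : iIndepFun X P)
    (hlaw : ∀ k, P.map (X k) = gaussianReal μ v) (K : ℕ) {b Δ : ℝ} (hΔ : 0 ≤ Δ) (hb : μ + Δ < b) :
    P (⋃ p ∈ (Finset.range K).offDiag, {ω | b < X p.1 ω ∧ |X p.2 ω - X p.1 ω| < Δ}) ≤
      ENNReal.ofReal (K ^ 2 * (v / (b - μ) * (2 * Δ) * gaussianPDFReal μ v (b - Δ) ^ 2)) := by
  have hpair : ∀ p ∈ (Finset.range K).offDiag,
      P {ω | b < X p.1 ω ∧ |X p.2 ω - X p.1 ω| < Δ} ≤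
        ENNReal.ofReal (v / (b - μ) * (2 * Δ) * gaussianPDFReal μ v (b - Δ) ^ 2) := by
    have hbμ : 0 < b - μ := by linarith
    intro p hp
    have hmills : gaussianReal μ v (Ioi b) ≤
        ENNReal.ofReal (v / (b - μ) * gaussianPDFReal μ v (b - Δ)) :=
      (gaussianReal_Ioi_le hv (by linarith)).trans <| ENNReal.ofReal_le_ofReal <|
        mul_le_mul_of_nonneg_left
          (gaussianPDFReal_antitoneOn (by simp; linarith) (by simp; linarith) (by linarith))
          (div_nonneg v.2 hbμ.le)
    calc P {ω | b < X p.1 ω ∧ |X p.2 ω - X p.1 ω| < Δ}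
        ≤ P (X p.1 ⁻¹' Ioi b) * ENNReal.ofReal (2 * Δ * gaussianPDFReal μ v (b - Δ)) :=
          measure_lt_and_abs_sub_lt_le hv (hmeas _) (hmeas _)
            (hindep.indepFun (Finset.mem_offDiag.mp hp).2.2) (hlaw _) hΔ (by linarith)
      _ ≤ ENNReal.ofReal (v / (b - μ) * gaussianPDFReal μ v (b - Δ)) *
            ENNReal.ofReal (2 * Δ * gaussianPDFReal μ v (b - Δ)) := by
          rw [← Measure.map_apply (hmeas _) measurableSet_Ioi, hlaw]
          gcongr
      _ = _ := by
          rw [← ENNReal.ofReal_mul]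
          · ring_nf
          · exact mul_nonneg (div_nonneg v.2 hbμ.le) (gaussianPDFReal_nonneg _ _ _)
  calc P (⋃ p ∈ (Finset.range K).offDiag, {ω | b < X p.1 ω ∧ |X p.2 ω - X p.1 ω| < Δ})
      ≤ ∑ p ∈ (Finset.range K).offDiag, P {ω | b < X p.1 ω ∧ |X p.2 ω - X p.1 ω| < Δ} :=
        measure_biUnion_finset_le _ _
    _ ≤ ∑ _p ∈ (Finset.range K).offDiag,
          ENNReal.ofReal (v / (b - μ) * (2 * Δ) * gaussianPDFReal μ v (b - Δ) ^ 2) :=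
        Finset.sum_le_sum hpair
    _ ≤ ENNReal.ofReal (K ^ 2 * (v / (b - μ) * (2 * Δ) * gaussianPDFReal μ v (b - Δ) ^ 2)) := by
        rw [Finset.sum_const, nsmul_eq_mul, ENNReal.ofReal_mul (sq_nonneg (K : ℝ)),
          ← Nat.cast_pow, ENNReal.ofReal_natCast]
        gcongr
        rw [Finset.offDiag_card, Finset.card_range]
        exact (Nat.sub_le _ _).trans (sq K).ge

lemma measure_exists_lt_abs_le (hv : v ≠ 0) (hmeas : ∀ k, Measurable (X k))
    (hlaw : ∀ k, P.map (X k) = gaussianReal μ v) (K : ℕ) {r : ℝ} (hr : |μ| < r) :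
    P {ω | ∃ k < K, r < |X k ω|} ≤
      ENNReal.ofReal (K * (2 * (v / (r - |μ|) * gaussianPDFReal μ v (μ + (r - |μ|))))) := by
  have hsub : {ω | ∃ k < K, r < |X k ω|} ⊆
      ⋃ k ∈ Finset.range K, X k ⁻¹' {x | r - |μ| < |x - μ|} := by
    rintro ω ⟨k, hk, hlt⟩
    refine mem_biUnion (Finset.mem_range.mpr hk) ?_
    simp only [mem_preimage, mem_ofPred_eq]
    linarith [abs_sub_abs_le_abs_sub (X k ω) μ]
  have hk : ∀ k, P (X k ⁻¹' {x | r - |μ| < |x - μ|}) ≤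
      ENNReal.ofReal (2 * (v / (r - |μ|) * gaussianPDFReal μ v (μ + (r - |μ|)))) := by
    intro k
    rw [← Measure.map_apply (hmeas k) (measurableSet_lt measurable_const
      (by fun_prop : Measurable fun x : ℝ => |x - μ|)), hlaw]
    exact gaussianReal_lt_abs_sub_le hv (by linarith)
  calc P {ω | ∃ k < K, r < |X k ω|}
      ≤ ∑ k ∈ Finset.range K, P (X k ⁻¹' {x | r - |μ| < |x - μ|}) :=
        (measure_mono hsub).trans (measure_biUnion_finset_le _ _)
    _ ≤ ∑ _k ∈ Finset.range K,
          ENNReal.ofReal (2 * (v / (r - |μ|) * gaussianPDFReal μ v (μ + (r - |μ|)))) :=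
        Finset.sum_le_sum fun k _ => hk k
    _ = _ := by
        rw [Finset.sum_const, Finset.card_range, nsmul_eq_mul,
          ENNReal.ofReal_mul (Nat.cast_nonneg _), ENNReal.ofReal_natCast]

end GaussianFamily

/-- With `ℓ = log K`, the expected number of `K` standard Gaussians above this level is about
`e^ℓ e^{-T²/2} / T = ℓ^{β/2} / T ≍ ℓ^{(β-1)/2}`, which tends to infinity as soon as `β > 1`. -/
noncomputable def extremeLevel (β ℓ : ℝ) : ℝ := √(2 * ℓ - β * log ℓ)

lemma eventually_extremeLevel {β : ℝ} (hβ : 0 < β) : ∀ᶠ ℓ in atTop,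
    extremeLevel β ℓ ^ 2 = 2 * ℓ - β * log ℓ ∧ √ℓ ≤ extremeLevel β ℓ ∧
      extremeLevel β ℓ ≤ √(2 * ℓ) ∧ 1 ≤ extremeLevel β ℓ := by
  filter_upwards [isLittleO_log_id_atTop.bound (inv_pos.mpr hβ), eventually_ge_atTop 1]
    with ℓ hlog hℓ
  have hlog0 := log_nonneg hℓ
  rw [norm_of_nonneg hlog0, id, norm_of_nonneg (by linarith), inv_mul_eq_div,
    le_div_iff₀ hβ] at hlog
  refine ⟨sq_sqrt (by nlinarith), sqrt_le_sqrt (by nlinarith), sqrt_le_sqrt (by nlinarith),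
    one_le_sqrt.mpr (by nlinarith)⟩

lemma tendsto_exp_div_extremeLevel_mul_exp_atTop {β : ℝ} (hβ : 1 < β) :
    Tendsto (fun ℓ => rexp ℓ / extremeLevel β ℓ *
      rexp (-(extremeLevel β ℓ + (extremeLevel β ℓ)⁻¹) ^ 2 / 2)) atTop atTop := by
  have hlower : Tendsto (fun ℓ => (β - 1) / 2 * log ℓ - (log 2 + 3) / 2) atTop atTop :=
    tendsto_atTop_add_const_right _ _
      (tendsto_log_atTop.const_mul_atTop (by linarith))
  have hexponent : Tendsto (fun ℓ => ℓ - log (extremeLevel β ℓ) -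
      (extremeLevel β ℓ + (extremeLevel β ℓ)⁻¹) ^ 2 / 2) atTop atTop := by
    refine tendsto_atTop_mono' _ ?_ hlower
    filter_upwards [eventually_extremeLevel (by linarith : 0 < β), eventually_ge_atTop 1]
      with ℓ hT hℓ
    obtain ⟨hT2, -, hTle, hT1⟩ := hT
    set T := extremeLevel β ℓ
    have hlogT : log T ≤ (log 2 + log ℓ) / 2 := by
      rw [← log_mul two_ne_zero (by positivity), ← log_sqrt (by positivity)]
      exact log_le_log (by positivity) hTle
    have hsq : (T + T⁻¹) ^ 2 ≤ T ^ 2 + 3 := by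
      have h₁ : T⁻¹ ≤ 1 := inv_le_one_of_one_le₀ hT1
      have h₂ : T * T⁻¹ = 1 := mul_inv_cancel₀ (by positivity)
      nlinarith [inv_pos.mpr (show 0 < T by positivity)]
    nlinarith
  refine (tendsto_exp_atTop.comp hexponent).congr' ?_
  filter_upwards [eventually_extremeLevel (by linarith : 0 < β)] with ℓ hT
  rw [Function.comp_apply, exp_sub, exp_sub, exp_log (by linarith [hT.2.2.2]), neg_div, exp_neg,
    div_eq_mul_inv _ (rexp _)]

lemma tendsto_exp_sq_mul_div_mul_exp_nhds_zero {σ η β : ℝ} (hσ : 0 < σ) (hη : 1 / 2 < η)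
    (hβ : 0 < β) (hβη : β < η + 1 / 2) :
    Tendsto (fun ℓ => rexp ℓ ^ 2 * (ℓ ^ (-η) / (σ * extremeLevel β ℓ - ℓ ^ (-η))) *
      rexp (-(extremeLevel β ℓ - 2 * ℓ ^ (-η) / σ) ^ 2)) atTop (𝓝 0) := by
  have hsmall : ∀ᶠ ℓ : ℝ in atTop, √(2 * ℓ) * ℓ ^ (-η) < σ / 4 := by
    have h := (tendsto_rpow_neg_atTop (by linarith : 0 < η - 1 / 2)).const_mul √2
    rw [mul_zero] at h
    refine (h.eventually_lt_const (show (0 : ℝ) < σ / 4 by positivity)).mp ?_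
    filter_upwards [eventually_gt_atTop 0] with ℓ hℓ h
    rwa [sqrt_mul zero_le_two, sqrt_eq_rpow ℓ, mul_assoc, ← rpow_add hℓ,
      show 1 / 2 + -η = -(η - 1 / 2) by ring]
  have hupper : Tendsto (fun ℓ => (β - η - 1 / 2) * log ℓ + (1 - log (σ / 2))) atTop atBot :=
    tendsto_atBot_add_const_right _ _
      (tendsto_log_atTop.const_mul_atTop_of_neg (by linarith))
  have hbound : ∀ᶠ ℓ in atTop, rexp ℓ ^ 2 * (ℓ ^ (-η) / (σ * extremeLevel β ℓ - ℓ ^ (-η))) *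
      rexp (-(extremeLevel β ℓ - 2 * ℓ ^ (-η) / σ) ^ 2) ∈
        Icc 0 (rexp ((β - η - 1 / 2) * log ℓ + (1 - log (σ / 2)))) := by
    filter_upwards [eventually_extremeLevel hβ, hsmall, eventually_ge_atTop 1] with ℓ hT hsm hℓ
    obtain ⟨hT2, hTge, hTle, hT1⟩ := hT
    set T := extremeLevel β ℓ
    set D := ℓ ^ (-η)
    have hD : 0 < D := rpow_pos_of_pos (by linarith) _
    have hTD : T * D ≤ σ / 4 := by nlinarith
    have hden : σ * √ℓ / 2 ≤ σ * T - D := by nlinarith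
    have hden0 : 0 < σ * T - D := lt_of_lt_of_le (by positivity) hden
    refine ⟨by positivity, ?_⟩
    have hlogden : log (σ / 2) + log ℓ / 2 ≤ log (σ * T - D) := by
      rw [← log_sqrt (by linarith), ← log_mul (by positivity) (by positivity)]
      exact log_le_log (by positivity) (by linarith)
    have hsq : T ^ 2 - 1 ≤ (T - 2 * D / σ) ^ 2 := by
      have h : 2 * T * (2 * D / σ) ≤ 1 := by
        rw [show 2 * T * (2 * D / σ) = 4 * (T * D) / σ by ring, div_le_one hσ]
        linarith
      nlinarith [sq_nonneg (2 * D / σ)]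
    have hlogD : log D = -η * log ℓ := log_rpow (by linarith) _
    calc rexp ℓ ^ 2 * (D / (σ * T - D)) * rexp (-(T - 2 * D / σ) ^ 2)
        = rexp (2 * ℓ + log D - log (σ * T - D) - (T - 2 * D / σ) ^ 2) := by
          have h2 : rexp (2 * ℓ) = rexp ℓ ^ 2 := by rw [sq, ← exp_add, two_mul]
          rw [exp_sub, exp_sub, exp_add, exp_log hD, exp_log hden0, h2, exp_neg]
          ring
      _ ≤ rexp ((β - η - 1 / 2) * log ℓ + (1 - log (σ / 2))) := by
          gcongr
          nlinarith
  exact squeeze_zero' (hbound.mono fun _ h => h.1) (hbound.mono fun _ h => h.2)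
    (tendsto_exp_atBot.comp hupper)

lemma tendsto_sub_rpow_sub_sq_div_atBot {η : ℝ} (hη : 1 / 2 < η) (c : ℝ) {w : ℝ} (hw : 0 < w) :
    Tendsto (fun ℓ => ℓ - (ℓ ^ η - c) ^ 2 / w) atTop atBot := by
  have hupper : Tendsto (fun ℓ => ℓ * (1 - ℓ ^ (2 * η - 1) / (2 * w)) + c ^ 2 / w) atTop atBot := by
    refine tendsto_atBot_add_const_right _ _ (tendsto_id.atTop_mul_atBot₀ ?_)
    refine tendsto_atBot_add_const_left _ _ (tendsto_neg_atTop_atBot.comp ?_)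
    exact (tendsto_rpow_atTop (by linarith)).atTop_div_const (by positivity)
  refine tendsto_atBot_mono' _ ?_ hupper
  filter_upwards [eventually_gt_atTop 0] with ℓ hℓ
  have hpow : (ℓ ^ η) ^ 2 = ℓ * ℓ ^ (2 * η - 1) := by
    rw [← rpow_natCast, ← rpow_mul hℓ.le, ← rpow_one_add' hℓ.le (by linarith)]
    ring_nf
  have hsq : (ℓ ^ η) ^ 2 / 2 - c ^ 2 ≤ (ℓ ^ η - c) ^ 2 := by nlinarith [sq_nonneg (ℓ ^ η - 2 * c)]
  calc ℓ - (ℓ ^ η - c) ^ 2 / w ≤ ℓ - ((ℓ ^ η) ^ 2 / 2 - c ^ 2) / w := by gcongr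
    _ = ℓ * (1 - ℓ ^ (2 * η - 1) / (2 * w)) + c ^ 2 / w := by
        rw [hpow]
        field_simp
        ring

lemma tendsto_log_natCast_atTop : Tendsto (fun K : ℕ => log K) atTop atTop :=
  tendsto_log_atTop.comp tendsto_natCast_atTop_atTop

lemma sq_nnreal_ne_zero {σ : ℝ} (hσ : σ ≠ 0) : (⟨σ ^ 2, sq_nonneg σ⟩ : ℝ≥0) ≠ 0 :=
  ne_of_gt (pow_pos (abs_pos.mpr hσ) 2 |>.trans_eq (sq_abs σ))

section ExtremeLevelFamily

variable {Ω : Type*} [MeasurableSpace Ω] {P : Measure Ω} {μ σ : ℝ} {X : ℕ → Ω → ℝ}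

lemma tendsto_measure_forall_le_extremeLevel {β : ℝ} (hσ : 0 < σ) (hβ : 1 < β)
    (hmeas : ∀ k, Measurable (X k)) (hindep : iIndepFun X P)
    (hlaw : ∀ k, P.map (X k) = gaussianReal μ ⟨σ ^ 2, sq_nonneg σ⟩) :
    Tendsto (fun K : ℕ => P {ω | ∀ k < K, X k ω ≤ μ + σ * extremeLevel β (log K)})
      atTop (𝓝 0) := by
  set c := σ * (σ * √(2 * π))⁻¹
  have hF := ((tendsto_exp_div_extremeLevel_mul_exp_atTop hβ).comp
    tendsto_log_natCast_atTop).const_mul_atTop (show 0 < c by positivity)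
  have hlim := ENNReal.tendsto_ofReal (tendsto_exp_atBot.comp (tendsto_neg_atTop_atBot.comp hF))
  rw [ENNReal.ofReal_zero] at hlim
  refine tendsto_of_tendsto_of_tendsto_of_le_of_le' tendsto_const_nhds hlim
    (Eventually.of_forall fun _ => zero_le) ?_
  filter_upwards [tendsto_log_natCast_atTop.eventually (eventually_extremeLevel (by linarith)),
    eventually_ge_atTop 1] with K hT hK
  set t := extremeLevel β (log K) with ht_def
  have ht : 0 < t := by linarith [hT.2.2.2]
  refine (measure_forall_le_le (sq_nnreal_ne_zero hσ.ne') hmeas hindep hlaw K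
    (le_add_of_nonneg_right (by positivity)) (by positivity : 0 ≤ σ / t)).trans_eq ?_
  rw [show μ + σ * t + σ / t = μ + σ * (t + t⁻¹) by ring, gaussianPDFReal_add_mul hσ]
  simp only [Function.comp_apply, c, ← ht_def]
  rw [exp_log (by exact_mod_cast hK)]
  ring_nf

lemma tendsto_measure_close_pair_extremeLevel [IsProbabilityMeasure P] {η β : ℝ} (hσ : 0 < σ)
    (hη : 1 / 2 < η) (hβ : 0 < β) (hβη : β < η + 1 / 2) (hmeas : ∀ k, Measurable (X k))
    (hindep : iIndepFun X P) (hlaw : ∀ k, P.map (X k) = gaussianReal μ ⟨σ ^ 2, sq_nonneg σ⟩) :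
    Tendsto (fun K : ℕ => P (⋃ p ∈ (Finset.range K).offDiag,
      {ω | μ + σ * extremeLevel β (log K) - log K ^ (-η) < X p.1 ω ∧
        |X p.2 ω - X p.1 ω| < log K ^ (-η)})) atTop (𝓝 0) := by
  set C := 2 * σ ^ 2 * (σ * √(2 * π))⁻¹ ^ 2
  have hF := ((tendsto_exp_sq_mul_div_mul_exp_nhds_zero hσ hη hβ hβη).comp
    tendsto_log_natCast_atTop).const_mul C
  rw [mul_zero] at hF
  have hlim := ENNReal.tendsto_ofReal hF
  rw [ENNReal.ofReal_zero] at hlim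
  refine tendsto_of_tendsto_of_tendsto_of_le_of_le' tendsto_const_nhds hlim
    (Eventually.of_forall fun _ => zero_le) ?_
  have hΔ : ∀ᶠ K : ℕ in atTop, log K ^ (-η) < σ / 2 :=
    ((tendsto_rpow_neg_atTop (by linarith)).comp tendsto_log_natCast_atTop).eventually_lt_const
      (by positivity)
  filter_upwards [tendsto_log_natCast_atTop.eventually (eventually_extremeLevel hβ),
    eventually_ge_atTop 1, hΔ] with K hT hK hΔK
  set t := extremeLevel β (log K) with ht_def
  set Δ := log K ^ (-η) with hΔ_def
  have hΔ0 : 0 ≤ Δ := rpow_nonneg (log_nonneg (by exact_mod_cast hK)) _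
  refine (measure_exists_close_pair_le (sq_nnreal_ne_zero hσ.ne') hmeas hindep hlaw K hΔ0
    (by nlinarith [hT.2.2.2])).trans_eq ?_
  have hsq : ∀ u : ℝ, rexp (-u ^ 2 / 2) ^ 2 = rexp (-u ^ 2) := fun u => by
    rw [sq (rexp _), ← exp_add]
    ring_nf
  rw [show μ + σ * t - Δ - Δ = μ + σ * (t - 2 * Δ / σ) by field_simp; ring,
    gaussianPDFReal_add_mul hσ, mul_pow, hsq]
  simp only [Function.comp_apply, C, ← ht_def, ← hΔ_def]
  rw [exp_log (by exact_mod_cast hK)]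
  congr 1
  change (K : ℝ) ^ 2 * (σ ^ 2 / (μ + σ * t - Δ - μ) * (2 * Δ) *
    ((σ * √(2 * π))⁻¹ ^ 2 * rexp (-(t - 2 * Δ / σ) ^ 2))) = _
  ring

lemma tendsto_measure_exists_rpow_lt_abs {η : ℝ} (hσ : 0 < σ) (hη : 1 / 2 < η)
    (hmeas : ∀ k, Measurable (X k))
    (hlaw : ∀ k, P.map (X k) = gaussianReal μ ⟨σ ^ 2, sq_nonneg σ⟩) :
    Tendsto (fun K : ℕ => P {ω | ∃ k < K, log K ^ η < |X k ω|}) atTop (𝓝 0) := by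
  set C := 2 * σ ^ 2 * (√(2 * π * σ ^ 2))⁻¹
  have hF := ((tendsto_exp_atBot.comp (tendsto_sub_rpow_sub_sq_div_atBot hη |μ|
    (show 0 < 2 * σ ^ 2 by positivity))).comp tendsto_log_natCast_atTop).const_mul C
  rw [mul_zero] at hF
  have hlim := ENNReal.tendsto_ofReal hF
  rw [ENNReal.ofReal_zero] at hlim
  refine tendsto_of_tendsto_of_tendsto_of_le_of_le' tendsto_const_nhds hlim
    (Eventually.of_forall fun _ => zero_le) ?_
  have hr : ∀ᶠ K : ℕ in atTop, |μ| + 1 ≤ log K ^ η :=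
    ((tendsto_rpow_atTop (by linarith)).comp tendsto_log_natCast_atTop).eventually_ge_atTop _
  filter_upwards [hr, eventually_ge_atTop 1] with K hrK hK
  refine (measure_exists_lt_abs_le (sq_nnreal_ne_zero hσ.ne') hmeas hlaw K (by linarith)).trans
    (ENNReal.ofReal_le_ofReal ?_)
  set ρ := log K ^ η - |μ| with hρ_def
  have hρ : 1 ≤ ρ := by linarith
  change (K : ℝ) * (2 * (σ ^ 2 / ρ *
    ((√(2 * π * σ ^ 2))⁻¹ * rexp (-(μ + ρ - μ) ^ 2 / (2 * σ ^ 2))))) ≤ _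
  simp only [Function.comp_apply, C, ← hρ_def]
  calc (K : ℝ) * (2 * (σ ^ 2 / ρ * ((√(2 * π * σ ^ 2))⁻¹ * rexp (-(μ + ρ - μ) ^ 2 / (2 * σ ^ 2)))))
      ≤ K * (2 * (σ ^ 2 * ((√(2 * π * σ ^ 2))⁻¹ * rexp (-(μ + ρ - μ) ^ 2 / (2 * σ ^ 2))))) := by
        gcongr
        exact div_le_self (sq_nonneg σ) hρ
    _ = C * rexp (log K - ρ ^ 2 / (2 * σ ^ 2)) := by
        rw [add_sub_cancel_left, exp_sub, exp_log (by exact_mod_cast hK), neg_div, exp_neg]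
        ring

end ExtremeLevelFamily

theorem stmt_5 {Ω : Type*} [MeasurableSpace Ω] (P : Measure Ω) [IsProbabilityMeasure P]
    (μ₀ σ₀ η : ℝ) (hσ₀ : 0 < σ₀) (hη : 1 / 2 < η)
    (X : ℕ → Ω → ℝ) (hmeas : ∀ k, Measurable (X k))
    (hindep : iIndepFun X P)
    (hdist : ∀ k, Measure.map (X k) P = gaussianReal μ₀ ⟨σ₀ ^ 2, sq_nonneg σ₀⟩)
    (μstar : ℕ → Ω → ℝ)
    (hμstar : ∀ (K : ℕ) (hK : K ≠ 0) (ω : Ω),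
      μstar K ω = (Finset.range K).sup' (Finset.nonempty_range_iff.mpr hK) (fun k => X k ω))
    (J : ℕ → Ω → ℕ)
    (hJ : ∀ K ω, J K ω = ((Finset.range K).filter (fun k => X k ω < μstar K ω)).card)
    (Δ : ℕ → ℝ) (hΔ : ∀ K, Δ K = (Real.log K) ^ (-η)) :
    Tendsto (fun K : ℕ =>
        P {ω | (∀ k < K, X k ω < μstar K ω → X k ω ≤ μstar K ω - Δ K) ∧
               (∀ k < K, |X k ω| ≤ (Δ K)⁻¹) ∧
               Δ K * K ≤ (J K ω : ℝ)})
      atTop (nhds 1) := by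
  obtain rfl : Δ = fun K : ℕ => Real.log K ^ (-η) := funext hΔ
  obtain ⟨β, hβ, hβη⟩ : ∃ β : ℝ, 1 < β ∧ β < η + 1 / 2 := ⟨3 / 4 + η / 2, by linarith, by linarith⟩
  refine tendsto_measure_nhds_one_of_compl_subset ?_
    (tendsto_measure_union_nhds_zero (tendsto_measure_union_nhds_zero
      (tendsto_measure_forall_le_extremeLevel hσ₀ hβ hmeas hindep hdist)
      (tendsto_measure_close_pair_extremeLevel hσ₀ hη (by linarith) hβη hmeas hindep hdist))
      (tendsto_measure_exists_rpow_lt_abs hσ₀ hη hmeas hdist))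
  have hΔ0 := (tendsto_rpow_neg_atTop (by linarith : 0 < η)).comp tendsto_log_natCast_atTop
  filter_upwards [eventually_ge_atTop 2, hΔ0.eventually_lt_const one_half_pos,
    tendsto_log_natCast_atTop.eventually_gt_atTop 0] with K hK hΔK hlogK
  intro ω hω
  simp only [mem_compl_iff, mem_union, mem_ofPred_eq, mem_iUnion, not_or, not_forall, not_exists,
    exists_prop] at hω
  obtain ⟨⟨⟨m, hm, ham⟩, hgap⟩, hbdd⟩ := hω
  have hK0 : K ≠ 0 := by omega
  rw [mem_ofPred_eq, hJ, hμstar K hK0]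
  have hmax := (not_le.mp ham).trans_le
    (Finset.le_sup' (fun k => X k ω) (Finset.mem_range.mpr hm))
  obtain ⟨hbelow, hcard⟩ := le_sup'_sub_and_card_filter_lt_sup' (Finset.nonempty_range_iff.mpr hK0)
    (rpow_pos_of_pos hlogK _) hmax fun p hp h => hgap p ⟨hp, h⟩
  refine ⟨fun k hk => hbelow k (Finset.mem_range.mpr hk), fun k hk => ?_, ?_⟩
  · rw [rpow_neg hlogK.le, inv_inv]
    exact not_lt.mp fun h => hbdd k ⟨hk, h⟩
  · rw [hcard, Finset.card_range, Nat.cast_sub (by omega), Nat.cast_one]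
    have : (2 : ℝ) ≤ K := by exact_mod_cast hK
    simp only [Function.comp_apply] at hΔK
    nlinarith
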